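/- arXiv:2505.14516 — 2 statements merged into one kernel-verified Lean document; each statement's English description precedes it below -/
import Mathlib

section
/- Let F be a field of sets over a set X, let A be an atom of F, and let A' be a non-empty proper subset of A. Then every atom of the field of sets C(F ∪ {A'}) generated by F together with A' is either an atom of F, or equal to A', or equal to A \ A'. -/
/-- A field of sets over `X`: contains `X` (i.e. `univ`) and is closed under
finite unions, finite intersections and complements relative to `X`. -/
def IsSetField {X : Type*} (F : Set (Set X)) : Prop :=
  Set.univ ∈ F ∧ (∀ A ∈ F, ∀ B ∈ F, A ∪ B ∈ F) ∧
    (∀ A ∈ F, ∀ B ∈ F, A ∩ B ∈ F) ∧ (∀ A ∈ F, Aᶜ ∈ F)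

/-- An atom of a field of sets `F`: a non-empty member of `F` none of whose
non-empty proper subsets belongs to `F`. -/
def SetFieldAtom {X : Type*} (F : Set (Set X)) (A : Set X) : Prop :=
  A ∈ F ∧ A.Nonempty ∧ ∀ B ∈ F, B ⊂ A → B = ∅

/-- The field of sets generated by a family `S` of subsets of `X`:
the smallest field of sets over `X` containing every member of `S`. -/
def genSetField {X : Type*} (S : Set (Set X)) : Set (Set X) :=
  ⋂₀ {F | IsSetField F ∧ S ⊆ F}

/-!
Every member `W` of the field generated by `F ∪ {A'}` has its part `W \ A` outside `A` in `F`
and does not split `A'` or `A \ A'`: each of them lies inside `W` or is disjoint from it. The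
sets with these properties form a field containing `F` (since `A` is an atom of `F`, no member
of `F` splits `A`) and `A'`. Hence an atom `B` of the generated field either misses `A`, and is
then an atom of `F`, or meets `A'` or `A \ A'`, hence contains it, and then equals it.
-/

open Set

section

variable {X : Type*}

namespace IsSetField

variable {F G : Set (Set X)}

theorem univ_mem (hF : IsSetField F) : univ ∈ F := hF.1

theorem union_mem (hF : IsSetField F) {U V : Set X} (hU : U ∈ F) (hV : V ∈ F) : U ∪ V ∈ F :=
  hF.2.1 U hU V hV

theorem inter_mem (hF : IsSetField F) {U V : Set X} (hU : U ∈ F) (hV : V ∈ F) : U ∩ V ∈ F :=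
  hF.2.2.1 U hU V hV

theorem compl_mem (hF : IsSetField F) {U : Set X} (hU : U ∈ F) : Uᶜ ∈ F := hF.2.2.2 U hU

theorem empty_mem (hF : IsSetField F) : ∅ ∈ F := by
  simpa using hF.compl_mem hF.univ_mem

theorem diff_mem (hF : IsSetField F) {U V : Set X} (hU : U ∈ F) (hV : V ∈ F) : U \ V ∈ F :=
  hF.inter_mem hU (hF.compl_mem hV)

theorem inter (hF : IsSetField F) (hG : IsSetField G) : IsSetField (F ∩ G) :=
  ⟨⟨hF.univ_mem, hG.univ_mem⟩, fun _ hU _ hV => ⟨hF.union_mem hU.1 hV.1, hG.union_mem hU.2 hV.2⟩,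
    fun _ hU _ hV => ⟨hF.inter_mem hU.1 hV.1, hG.inter_mem hU.2 hV.2⟩,
    fun _ hU => ⟨hF.compl_mem hU.1, hG.compl_mem hU.2⟩⟩

theorem setOf_diff_mem (hF : IsSetField F) {A : Set X} (hA : A ∈ F) :
    IsSetField {W | W \ A ∈ F} := by
  refine ⟨?_, fun U hU V hV => ?_, fun U hU V hV => ?_, fun U hU => ?_⟩
  · simpa [compl_eq_univ_sdiff] using hF.compl_mem hA
  · simpa only [mem_ofPred_eq, union_sdiff_distrib] using hF.union_mem hU hV
  · have : (U ∩ V) \ A = (U \ A) ∩ (V \ A) := by ext; simp; tauto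
    simpa only [mem_ofPred_eq, this] using hF.inter_mem hU hV
  · have : Uᶜ \ A = ((U \ A) ∪ A)ᶜ := by ext; simp
    simpa only [mem_ofPred_eq, this] using hF.compl_mem (hF.union_mem hU hA)

end IsSetField

theorem isSetField_setOf_subset_or_disjoint (T : Set X) :
    IsSetField {W | T ⊆ W ∨ Disjoint W T} := by
  refine ⟨Or.inl (subset_univ T), ?_, ?_, ?_⟩
  · rintro U (hU | hU) V (hV | hV)
    · exact Or.inl (hU.trans subset_union_left)
    · exact Or.inl (hU.trans subset_union_left)
    · exact Or.inl (hV.trans subset_union_right)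
    · exact Or.inr (disjoint_union_left.2 ⟨hU, hV⟩)
  · rintro U (hU | hU) V (hV | hV)
    · exact Or.inl (subset_inter hU hV)
    · exact Or.inr (hV.inter_left' U)
    · exact Or.inr (hU.inter_left V)
    · exact Or.inr (hU.inter_left V)
  · rintro U (hU | hU)
    · exact Or.inr (disjoint_compl_left_iff_subset.2 hU)
    · exact Or.inl hU.subset_compl_left

theorem isSetField_genSetField (S : Set (Set X)) : IsSetField (genSetField S) :=
  ⟨fun _ hG => hG.1.1, fun U hU V hV G hG => hG.1.2.1 U (hU G hG) V (hV G hG),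
    fun U hU V hV G hG => hG.1.2.2.1 U (hU G hG) V (hV G hG),
    fun U hU G hG => hG.1.2.2.2 U (hU G hG)⟩

theorem subset_genSetField (S : Set (Set X)) : S ⊆ genSetField S :=
  fun _ hU _ hG => hG.2 hU

theorem genSetField_subset {S G : Set (Set X)} (hG : IsSetField G) (hSG : S ⊆ G) :
    genSetField S ⊆ G :=
  sInter_subset_of_mem ⟨hG, hSG⟩

namespace SetFieldAtom

variable {F G : Set (Set X)} {A : Set X}

theorem eq_of_subset (hA : SetFieldAtom F A) {C : Set X} (hC : C ∈ F) (hne : C.Nonempty)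
    (hCA : C ⊆ A) : C = A := by
  by_contra h
  exact hne.ne_empty (hA.2.2 C hC (hCA.ssubset_of_ne h))

theorem subset_or_disjoint (hF : IsSetField F) (hA : SetFieldAtom F A) {W : Set X} (hW : W ∈ F) :
    A ⊆ W ∨ Disjoint W A := by
  rw [or_iff_not_imp_right, not_disjoint_iff_nonempty_inter]
  intro hne
  exact (hA.eq_of_subset (hF.inter_mem hW hA.1) hne inter_subset_right).symm ▸ inter_subset_left

theorem eq_of_not_disjoint (hA : SetFieldAtom F A) {C : Set X} (hC : C ∈ F)
    (hCA : C ⊆ A ∨ Disjoint A C) (hAC : ¬Disjoint A C) : A = C :=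
  (hA.eq_of_subset hC ((not_disjoint_iff_nonempty_inter.1 hAC).mono inter_subset_right)
    (hCA.resolve_right hAC)).symm

theorem of_subset_of_mem (hA : SetFieldAtom G A) (hFG : F ⊆ G) (hAF : A ∈ F) :
    SetFieldAtom F A :=
  ⟨hAF, hA.2.1, fun C hC => hA.2.2 C (hFG hC)⟩

end SetFieldAtom

theorem mem_genSetField_union_singleton {F : Set (Set X)} (hF : IsSetField F) {A A' : Set X}
    (hA : SetFieldAtom F A) (hA'A : A' ⊆ A) {W : Set X} (hW : W ∈ genSetField (F ∪ {A'})) :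
    W \ A ∈ F ∧ (A' ⊆ W ∨ Disjoint W A') ∧ (A \ A' ⊆ W ∨ Disjoint W (A \ A')) := by
  refine genSetField_subset ((hF.setOf_diff_mem hA.1).inter
    ((isSetField_setOf_subset_or_disjoint A').inter
      (isSetField_setOf_subset_or_disjoint (A \ A')))) ?_ hW
  rintro U (hU | rfl)
  · refine ⟨hF.diff_mem hU hA.1, ?_⟩
    rcases hA.subset_or_disjoint hF hU with hAU | hUA
    · exact ⟨Or.inl (hA'A.trans hAU), Or.inl (sdiff_subset.trans hAU)⟩
    · exact ⟨Or.inr (hUA.mono_right hA'A), Or.inr (hUA.mono_right sdiff_subset)⟩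
  · exact ⟨by simpa [sdiff_eq_empty.2 hA'A] using hF.empty_mem, Or.inl subset_rfl,
      Or.inr disjoint_sdiff_right⟩

end

theorem stmt_0_general {X : Type*} (F : Set (Set X)) (hF : IsSetField F)
    (A : Set X) (hA : SetFieldAtom F A)
    (A' : Set X) (hA'sub : A' ⊆ A)
    (B : Set X) (hB : SetFieldAtom (genSetField (F ∪ {A'})) B) :
    SetFieldAtom F B ∨ B = A' ∨ B = A \ A' := by
  have hgen := subset_genSetField (F ∪ {A'})
  have hA'gen : A' ∈ genSetField (F ∪ {A'}) := hgen (Or.inr rfl)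
  have hdiff_gen : A \ A' ∈ genSetField (F ∪ {A'}) :=
    (isSetField_genSetField _).diff_mem (hgen (Or.inl hA.1)) hA'gen
  obtain ⟨hBA, hA'B, hdiffB⟩ := mem_genSetField_union_singleton hF hA hA'sub hB.1
  by_cases hBA' : Disjoint B A'
  · by_cases hBdiff : Disjoint B (A \ A')
    · have hBA_disj : Disjoint B A := by
        rw [← union_sdiff_cancel hA'sub]
        exact disjoint_union_right.2 ⟨hBA', hBdiff⟩
      exact Or.inl (hB.of_subset_of_mem (fun U hU => hgen (Or.inl hU))
        (hBA_disj.sdiff_eq_left ▸ hBA))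
    · exact Or.inr (Or.inr (hB.eq_of_not_disjoint hdiff_gen hdiffB hBdiff))
  · exact Or.inr (Or.inl (hB.eq_of_not_disjoint hA'gen hA'B hBA'))

theorem stmt_0 {X : Type*} (F : Set (Set X)) (hF : IsSetField F)
    (A : Set X) (hA : SetFieldAtom F A)
    (A' : Set X) (hA'ne : A'.Nonempty) (hA'sub : A' ⊆ A) (hA'proper : A' ≠ A)
    (B : Set X) (hB : SetFieldAtom (genSetField (F ∪ {A'})) B) :
    SetFieldAtom F B ∨ B = A' ∨ B = A \ A' :=
  stmt_0_general F hF A hA A' hA'sub B hB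
end

section
/- Let Ω be a finite set, let d ≥ 2 be an integer with |Ω| ≥ d, and let F be a function assigning to every d-element subset T of Ω a non-empty collection F(T) of 2-element subsets of T. If x1, ..., xd are sampled independently and uniformly at random from Ω, then the conditional probability that {x1, x2} ∈ F({x1, ..., xd}), given that x1, ..., xd are pairwise distinct, is at least 1/C(d,2) = 2/(d(d−1)). -/
open Finset Function

/-!
Every injective tuple `x` is favorable for some `k`-set `s` of positions, namely the positions
at which `x` takes the values of a member of `F (image x)`. Precomposing with a permutation of
the positions does not change the image of `x`, so all `k`-sets of positions have equally many
favorable tuples, and a union bound over these `C(#ι, k)` sets gives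
`#injective ≤ C(#ι, k) * #favorable`.
-/

section

variable {ι Ω : Type*} [Fintype ι] [DecidableEq ι] [Fintype Ω] [DecidableEq Ω]

def favorableTuples (F : Finset Ω → Finset (Finset Ω)) (s : Finset ι) : Finset (ι → Ω) :=
  univ.filter fun x => Injective x ∧ s.image x ∈ F (univ.image x)

theorem mem_favorableTuples_map_perm (F : Finset Ω → Finset (Finset Ω)) (s : Finset ι)
    (σ : Equiv.Perm ι) (x : ι → Ω) :
    x ∈ favorableTuples F (s.map σ.toEmbedding) ↔ x ∘ σ ∈ favorableTuples F s := by
  have himage : univ.image (x ∘ σ) = univ.image x := by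
    rw [← image_image, image_univ_equiv]
  simp only [favorableTuples, mem_filter, mem_univ, true_and, map_eq_image, image_image,
    Equiv.coe_toEmbedding, himage, σ.injective_comp]

theorem card_favorableTuples_map_perm (F : Finset Ω → Finset (Finset Ω)) (s : Finset ι)
    (σ : Equiv.Perm ι) :
    #(favorableTuples F (s.map σ.toEmbedding)) = #(favorableTuples F s) :=
  card_equiv (σ.symm.arrowCongr (Equiv.refl Ω)) fun x => by
    rw [mem_favorableTuples_map_perm]; rfl

theorem card_favorableTuples_eq_of_card_eq (F : Finset Ω → Finset (Finset Ω)) {s t : Finset ι}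
    (h : #s = #t) : #(favorableTuples F s) = #(favorableTuples F t) := by
  obtain ⟨σ, rfl⟩ := Equiv.Perm.exists_map_finset_eq s t h
  exact (card_favorableTuples_map_perm F s σ).symm

theorem filter_injective_subset_biUnion_favorableTuples {F : Finset Ω → Finset (Finset Ω)}
    {k : ℕ} (hF : ∀ T : Finset Ω, #T = Fintype.card ι → ∃ P ∈ F T, P ⊆ T ∧ #P = k) :
    univ.filter (fun x : ι → Ω => Injective x) ⊆
      (univ.powersetCard k).biUnion (favorableTuples F) := by
  intro x hx
  have hx : Injective x := (mem_filter.mp hx).2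
  obtain ⟨P, hPF, hPT, hPk⟩ := hF (univ.image x) (card_image_of_injective _ hx)
  obtain ⟨s, -, rfl⟩ := subset_image_iff.mp hPT
  rw [card_image_of_injective _ hx] at hPk
  exact mem_biUnion.mpr ⟨s, mem_powersetCard_univ.mpr hPk, by simp [favorableTuples, hx, hPF]⟩

theorem card_filter_injective_le_choose_mul {F : Finset Ω → Finset (Finset Ω)} {k : ℕ}
    (hF : ∀ T : Finset Ω, #T = Fintype.card ι → ∃ P ∈ F T, P ⊆ T ∧ #P = k)
    {s₀ : Finset ι} (hs₀ : #s₀ = k) :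
    #(univ.filter fun x : ι → Ω => Injective x) ≤
      (Fintype.card ι).choose k * #(favorableTuples F s₀) :=
  calc #(univ.filter fun x : ι → Ω => Injective x)
      ≤ #((univ.powersetCard k).biUnion (favorableTuples F)) :=
        card_le_card (filter_injective_subset_biUnion_favorableTuples hF)
    _ ≤ ∑ s ∈ univ.powersetCard k, #(favorableTuples F s) := card_biUnion_le
    _ = (Fintype.card ι).choose k * #(favorableTuples F s₀) := by
        rw [sum_congr rfl fun s hs => card_favorableTuples_eq_of_card_eq F
          ((mem_powersetCard_univ.mp hs).trans hs₀.symm), sum_const, card_powersetCard,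
          card_univ, smul_eq_mul]

end

/-- Sampling `x₁, …, x_d` uniformly and independently from a finite set `Ω` of
size at least `d ≥ 2`, the conditional probability that `{x₁, x₂} ∈ F({x₁, …, x_d})`,
given that `x₁, …, x_d` are pairwise distinct, is at least `1 / C(d,2)`.
Here `F` assigns to every `d`-element subset `T` of `Ω` a non-empty collection of
`2`-element subsets of `T`.  The conditional probability for the uniform product
measure on `Ω^d` is expressed as the ratio of the number of favorable distinct
tuples to the number of all distinct tuples. -/
theorem stmt_7 {Ω : Type*} [Fintype Ω] [DecidableEq Ω] (d : ℕ) (hd : 2 ≤ d)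
    (hΩ : d ≤ Fintype.card Ω)
    (F : Finset Ω → Finset (Finset Ω))
    (hF : ∀ T : Finset Ω, T.card = d →
      (F T).Nonempty ∧ ∀ P ∈ F T, P ⊆ T ∧ P.card = 2) :
    (1 : ℝ) / (d.choose 2) ≤
      ((univ.filter fun x : Fin d → Ω => Function.Injective x ∧
          ({x ⟨0, by omega⟩, x ⟨1, by omega⟩} : Finset Ω) ∈
            F (Finset.image x univ)).card : ℝ) /
        ((univ.filter fun x : Fin d → Ω => Function.Injective x).card : ℝ) := by
  set s₀ : Finset (Fin d) := {⟨0, by omega⟩, ⟨1, by omega⟩}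
  have hs₀ : #s₀ = 2 := card_pair (by simp [Fin.ext_iff])
  have hF' : ∀ T : Finset Ω, #T = Fintype.card (Fin d) → ∃ P ∈ F T, P ⊆ T ∧ #P = 2 := by
    intro T hT
    obtain ⟨⟨P, hP⟩, hsub⟩ := hF T (by simpa using hT)
    exact ⟨P, hP, hsub P hP⟩
  have hcount := card_filter_injective_le_choose_mul hF' hs₀
  rw [Fintype.card_fin] at hcount
  have hfav : favorableTuples F s₀ = univ.filter fun x : Fin d → Ω => Injective x ∧
      ({x ⟨0, by omega⟩, x ⟨1, by omega⟩} : Finset Ω) ∈ F (univ.image x) := by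
    simp only [favorableTuples, s₀, image_insert, image_singleton]
  obtain ⟨e⟩ := Embedding.nonempty_of_card_le (by simpa using hΩ : Fintype.card (Fin d) ≤ _)
  have hinj_pos : (0 : ℝ) < #(univ.filter fun x : Fin d → Ω => Injective x) :=
    Nat.cast_pos.mpr (card_pos.mpr ⟨e, by simp [e.injective]⟩)
  have hchoose_pos : (0 : ℝ) < d.choose 2 := Nat.cast_pos.mpr (Nat.choose_pos hd)
  rw [div_le_div_iff₀ hchoose_pos hinj_pos, one_mul, ← hfav]
  exact_mod_cast hcount.trans_eq (mul_comm _ _)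
end
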